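/- arXiv:1001.4120 — 7 statements merged into one kernel-verified Lean document; each statement's English description precedes it below -/
import Mathlib

section
/- Let E ⊆ D × S be the edge set of a connected bipartite graph between a finite set S of sources and a finite set D of destinations. If there exist two distinct sources each of degree greater than 1, or there exist two distinct destinations each of degree greater than 1, then E contains an X pattern, a Σ pattern, or a reversed-Σ pattern. -/
/-- An X pattern in the edge set `E ⊆ D × S`: distinct sources `i₁ ≠ i₂` and distinct
destinations `j₁ ≠ j₂` with all four edges present. -/
def patternX {S D : Type*} (E : Set (D × S)) : Prop :=
  ∃ i₁ i₂ : S, ∃ j₁ j₂ : D, i₁ ≠ i₂ ∧ j₁ ≠ j₂ ∧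
    (j₁, i₁) ∈ E ∧ (j₁, i₂) ∈ E ∧ (j₂, i₁) ∈ E ∧ (j₂, i₂) ∈ E

/-- A Σ pattern in `E`: distinct sources `i₁ ≠ i₂` and pairwise distinct destinations
`j₁, j₂, j₃` with edges `(j₁,i₁), (j₂,i₁), (j₂,i₂), (j₃,i₂)`. -/
def patternSigma {S D : Type*} (E : Set (D × S)) : Prop :=
  ∃ i₁ i₂ : S, ∃ j₁ j₂ j₃ : D, i₁ ≠ i₂ ∧ j₁ ≠ j₂ ∧ j₁ ≠ j₃ ∧ j₂ ≠ j₃ ∧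
    (j₁, i₁) ∈ E ∧ (j₂, i₁) ∈ E ∧ (j₂, i₂) ∈ E ∧ (j₃, i₂) ∈ E

/-- A reversed-Σ pattern in `E`: pairwise distinct sources `i₁, i₂, i₃` and distinct
destinations `j₁ ≠ j₂` with edges `(j₁,i₁), (j₁,i₂), (j₂,i₂), (j₂,i₃)`. -/
def patternRevSigma {S D : Type*} (E : Set (D × S)) : Prop :=
  ∃ i₁ i₂ i₃ : S, ∃ j₁ j₂ : D, i₁ ≠ i₂ ∧ i₁ ≠ i₃ ∧ i₂ ≠ i₃ ∧ j₁ ≠ j₂ ∧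
    (j₁, i₁) ∈ E ∧ (j₁, i₂) ∈ E ∧ (j₂, i₂) ∈ E ∧ (j₂, i₃) ∈ E

/-- The degree of a source `i`: the number of destinations `j` with `(j, i) ∈ E`. -/
noncomputable def srcDeg {S D : Type*} (E : Set (D × S)) (i : S) : ℕ :=
  {j : D | (j, i) ∈ E}.ncard

/-- The degree of a destination `j`: the number of sources `i` with `(j, i) ∈ E`. -/
noncomputable def dstDeg {S D : Type*} (E : Set (D × S)) (j : D) : ℕ :=
  {i : S | (j, i) ∈ E}.ncard

/-- The bipartite graph on the vertex set `S ⊕ D` whose edges are given by `E ⊆ D × S`. -/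
def bipartiteGraph {S D : Type*} (E : Set (D × S)) : SimpleGraph (S ⊕ D) :=
  SimpleGraph.fromRel (fun a b => ∃ p ∈ E, a = Sum.inl p.2 ∧ b = Sum.inr p.1)

section Aux
variable {S D : Type*}

lemma adj_lr {E : Set (D × S)} {i : S} {j : D}
    (h : (bipartiteGraph E).Adj (Sum.inl i) (Sum.inr j)) : (j, i) ∈ E := by
  simp only [bipartiteGraph, SimpleGraph.fromRel_adj] at h
  obtain ⟨-, ⟨p, hp, h1, h2⟩ | ⟨p, hp, h1, h2⟩⟩ := h
  · obtain rfl : i = p.2 := Sum.inl.inj h1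
    obtain rfl : j = p.1 := Sum.inr.inj h2
    exact hp
  · exact absurd h1 (by simp)

lemma not_adj_ll {E : Set (D × S)} {i i' : S} :
    ¬ (bipartiteGraph E).Adj (Sum.inl i) (Sum.inl i') := by
  simp [bipartiteGraph]

lemma not_adj_rr {E : Set (D × S)} {j j' : D} :
    ¬ (bipartiteGraph E).Adj (Sum.inr j) (Sum.inr j') := by
  simp [bipartiteGraph]

lemma src_other {E : Set (D × S)} {i : S} {j : D}
    (h : 1 < srcDeg E i) : ∃ j', j' ≠ j ∧ (j', i) ∈ E := by
  obtain ⟨b, hb, hbj⟩ := Set.exists_ne_of_one_lt_ncard h j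
  exact ⟨b, hbj, hb⟩

lemma dst_other {E : Set (D × S)} {i : S} {j : D}
    (h : 1 < dstDeg E j) : ∃ i', i' ≠ i ∧ (j, i') ∈ E := by
  obtain ⟨b, hb, hbi⟩ := Set.exists_ne_of_one_lt_ncard h i
  exact ⟨b, hbi, hb⟩

lemma base_src {E : Set (D × S)} {i₁ i₂ : S} {j j₁ j₃ : D}
    (hne : i₁ ≠ i₂) (h1 : (j, i₁) ∈ E) (h2 : (j, i₂) ∈ E)
    (hj1 : j₁ ≠ j) (hj1E : (j₁, i₁) ∈ E) (hj3 : j₃ ≠ j) (hj3E : (j₃, i₂) ∈ E) :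
    patternX E ∨ patternSigma E ∨ patternRevSigma E := by
  by_cases h : j₁ = j₃
  · exact Or.inl ⟨i₁, i₂, j, j₁, hne, hj1.symm, h1, h2, hj1E, h ▸ hj3E⟩
  · exact Or.inr (Or.inl ⟨i₁, i₂, j₁, j, j₃, hne, hj1, h, hj3.symm, hj1E, h1, h2, hj3E⟩)

lemma base_dst {E : Set (D × S)} {j₁ j₂ : D} {i i₁ i₃ : S}
    (hne : j₁ ≠ j₂) (h1 : (j₁, i) ∈ E) (h2 : (j₂, i) ∈ E)
    (hi1 : i₁ ≠ i) (hi1E : (j₁, i₁) ∈ E) (hi3 : i₃ ≠ i) (hi3E : (j₂, i₃) ∈ E) :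
    patternX E ∨ patternSigma E ∨ patternRevSigma E := by
  by_cases h : i₁ = i₃
  · exact Or.inl ⟨i, i₁, j₁, j₂, hi1.symm, hne, h1, hi1E, h2, h ▸ hi3E⟩
  · exact Or.inr (Or.inr ⟨i₁, i, i₃, j₁, j₂, hi1, h, hi3.symm, hne, hi1E, h1, h2, hi3E⟩)

lemma main_src {E : Set (D × S)} :
    ∀ n : ℕ, ∀ i₁ i₂ : S, i₁ ≠ i₂ → 1 < srcDeg E i₁ → 1 < srcDeg E i₂ →
    ∀ w : (bipartiteGraph E).Walk (Sum.inl i₁) (Sum.inl i₂), w.length = n →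
    patternX E ∨ patternSigma E ∨ patternRevSigma E := by
  intro n
  induction n using Nat.strong_induction_on with
  | _ n IH =>
    intro i₁ i₂ hne hd1 hd2 w hw
    cases w with
    | nil => exact absurd rfl hne
    | cons h p =>
      rename_i v
      cases v with
      | inl i' => exact absurd h not_adj_ll
      | inr j =>
        have hji1 : (j, i₁) ∈ E := adj_lr h
        cases p with
        | cons h₂ p₂ =>
          rename_i v₂
          cases v₂ with
          | inr j'' => exact absurd h₂ not_adj_rr
          | inl i' =>
            have hji' : (j, i') ∈ E := adj_lr h₂.symm
            by_cases hii : i' = i₁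
            · subst hii
              exact IH p₂.length (by simp at hw; omega) i' i₂ hne hd1 hd2 p₂ rfl
            · cases p₂ with
              | nil =>
                obtain ⟨j₁, hj1, hj1E⟩ := src_other (j := j) hd1
                obtain ⟨j₃, hj3, hj3E⟩ := src_other (j := j) hd2
                exact base_src hne hji1 hji' hj1 hj1E hj3 hj3E
              | cons h₃ p₃ =>
                rename_i v₃
                cases v₃ with
                | inl i'' => exact absurd h₃ not_adj_ll
                | inr j' =>
                  by_cases hjj : j' = j
                  · subst hjj
                    exact IH (p₃.length + 1) (by simp at hw; omega) i₁ i₂ hne hd1 hd2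
                      (SimpleGraph.Walk.cons h p₃) (by simp)
                  · obtain ⟨j₁, hj1, hj1E⟩ := src_other (j := j) hd1
                    have hj'E : (j', i') ∈ E := adj_lr h₃
                    exact base_src (Ne.symm hii) hji1 hji' hj1 hj1E hjj hj'E

lemma main_dst {E : Set (D × S)} :
    ∀ n : ℕ, ∀ j₁ j₂ : D, j₁ ≠ j₂ → 1 < dstDeg E j₁ → 1 < dstDeg E j₂ →
    ∀ w : (bipartiteGraph E).Walk (Sum.inr j₁) (Sum.inr j₂), w.length = n →
    patternX E ∨ patternSigma E ∨ patternRevSigma E := by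
  intro n
  induction n using Nat.strong_induction_on with
  | _ n IH =>
    intro j₁ j₂ hne hd1 hd2 w hw
    cases w with
    | nil => exact absurd rfl hne
    | cons h p =>
      rename_i v
      cases v with
      | inr j' => exact absurd h not_adj_rr
      | inl i =>
        have hji1 : (j₁, i) ∈ E := adj_lr h.symm
        cases p with
        | cons h₂ p₂ =>
          rename_i v₂
          cases v₂ with
          | inl i'' => exact absurd h₂ not_adj_ll
          | inr j' =>
            have hji' : (j', i) ∈ E := adj_lr h₂
            by_cases hjj : j' = j₁
            · subst hjj
              exact IH p₂.length (by simp at hw; omega) j' j₂ hne hd1 hd2 p₂ rfl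
            · cases p₂ with
              | nil =>
                obtain ⟨i₁, hi1, hi1E⟩ := dst_other (i := i) hd1
                obtain ⟨i₃, hi3, hi3E⟩ := dst_other (i := i) hd2
                exact base_dst hne hji1 hji' hi1 hi1E hi3 hi3E
              | cons h₃ p₃ =>
                rename_i v₃
                cases v₃ with
                | inr j''' => exact absurd h₃ not_adj_rr
                | inl i' =>
                  by_cases hii : i' = i
                  · subst hii
                    exact IH (p₃.length + 1) (by simp at hw; omega) j₁ j₂ hne hd1 hd2
                      (SimpleGraph.Walk.cons h p₃) (by simp)
                  · obtain ⟨i₁, hi1, hi1E⟩ := dst_other (i := i) hd1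
                    have hi'E : (j', i') ∈ E := adj_lr h₃.symm
                    exact base_dst (Ne.symm hjj) hji1 hji' hi1 hi1E hii hi'E

end Aux

/-- If a connected bipartite network has two distinct sources of degree greater than 1,
or two distinct destinations of degree greater than 1, then its edge set contains an
X pattern, a Σ pattern, or a reversed-Σ pattern. -/
theorem stmt0 {S D : Type*} [Fintype S] [Fintype D] (E : Set (D × S))
    (hconn : (bipartiteGraph E).Connected)
    (hdeg : (∃ i₁ i₂ : S, i₁ ≠ i₂ ∧ 1 < srcDeg E i₁ ∧ 1 < srcDeg E i₂) ∨
            (∃ j₁ j₂ : D, j₁ ≠ j₂ ∧ 1 < dstDeg E j₁ ∧ 1 < dstDeg E j₂)) :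
    patternX E ∨ patternSigma E ∨ patternRevSigma E := by
  rcases hdeg with ⟨i₁, i₂, hne, hd1, hd2⟩ | ⟨j₁, j₂, hne, hd1, hd2⟩
  · obtain ⟨w⟩ := hconn.preconnected (Sum.inl i₁) (Sum.inl i₂)
    exact main_src w.length i₁ i₂ hne hd1 hd2 w rfl
  · obtain ⟨w⟩ := hconn.preconnected (Sum.inr j₁) (Sum.inr j₂)
    exact main_dst w.length j₁ j₂ hne hd1 hd2 w rfl
end

section
/- Let E ⊆ D × S be the edge set of a bipartite graph between a finite set S of sources and a finite set D of destinations, and let M be a proper subset of E such that for every source i ∈ S there exists a destination j with (j,i) ∈ M, and for every destination j ∈ D there exists a source i with (j,i) ∈ M. Then there exist sources i ≠ i₀ and destinations j ≠ j₀ such that (j,i) ∈ E \ M, (j,i₀) ∈ M, and (j₀,i) ∈ M; in particular, (E,M) contains a Z-interference sub-network. -/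
/-- A Z-interference sub-network of `(E, M)`: distinct sources `i₁ ≠ i₂` and distinct
destinations `j₁ ≠ j₂` with `(j₁,i₁), (j₁,i₂), (j₂,i₂) ∈ E`, where `(j₁,i₁) ∈ M`,
`(j₂,i₂) ∈ M` but `(j₁,i₂) ∉ M`. -/
def patternZ {S D : Type*} (E M : Set (D × S)) : Prop :=
  ∃ i₁ i₂ : S, ∃ j₁ j₂ : D, i₁ ≠ i₂ ∧ j₁ ≠ j₂ ∧
    (j₁, i₁) ∈ E ∧ (j₁, i₂) ∈ E ∧ (j₂, i₂) ∈ E ∧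
    (j₁, i₁) ∈ M ∧ (j₂, i₂) ∈ M ∧ (j₁, i₂) ∉ M

/-- If `M` is a proper subset of `E` such that every source has a message in `M` and every
destination has a message in `M`, then there are sources `i ≠ i₀` and destinations `j ≠ j₀`
with `(j,i) ∈ E \ M`, `(j,i₀) ∈ M`, `(j₀,i) ∈ M`; in particular, `(E,M)` contains a
Z-interference sub-network. -/
theorem stmt1 {S D : Type*} [Fintype S] [Fintype D] (E M : Set (D × S))
    (hEM : M ⊂ E)
    (hsrc : ∀ i : S, ∃ j : D, (j, i) ∈ M)
    (hdst : ∀ j : D, ∃ i : S, (j, i) ∈ M) :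
    (∃ i i₀ : S, ∃ j j₀ : D, i ≠ i₀ ∧ j ≠ j₀ ∧
      (j, i) ∈ E \ M ∧ (j, i₀) ∈ M ∧ (j₀, i) ∈ M) ∧ patternZ E M := by
  obtain ⟨hsub, hne⟩ := hEM
  obtain ⟨⟨j, i⟩, hjiE, hjiM⟩ : ∃ p, p ∈ E ∧ p ∉ M := Set.not_subset.mp hne
  obtain ⟨i₀, hi₀⟩ := hdst j
  obtain ⟨j₀, hj₀⟩ := hsrc i
  have hii : i ≠ i₀ := fun h => hjiM (h ▸ hi₀)
  have hjj : j ≠ j₀ := fun h => hjiM (h ▸ hj₀)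
  refine ⟨⟨i, i₀, j, j₀, hii, hjj, ⟨hjiE, hjiM⟩, hi₀, hj₀⟩,
    i₀, i, j, j₀, hii.symm, hjj, hsub hi₀, hjiE, hsub hj₀, hi₀, hj₀, hjiM⟩
end

section
/- Let E ⊆ D × S be the edge set of a connected bipartite graph between a finite set S of sources and a finite set D of destinations. Suppose there exist two distinct sources i₀ ≠ j₀, each of degree greater than 1, whose neighborhoods are disjoint. Then E contains a Σ pattern or a reversed-Σ pattern. -/
/-!
If every source sharing a destination with `i₀` only reaches destinations of `i₀`, then the
sources sharing a destination with `i₀` together with the destinations of `i₀` form a set of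
vertices closed under adjacency, hence, by connectivity, containing `j₀`; this contradicts the
disjointness of the neighborhoods. So some path `i₀ – d₁ – s – d₂` ends at a destination `d₂`
not adjacent to `i₀`, and a second destination `j ≠ d₁` of `i₀` completes the Σ pattern
`j – i₀ – d₁ – s – d₂`.
-/

theorem SimpleGraph.Reachable.of_adj_closed {V : Type*} {G : SimpleGraph V} {P : V → Prop}
    {u v : V} (huv : G.Reachable u v) (hu : P u) (hP : ∀ x y, G.Adj x y → P x → P y) :
    P v := by
  rw [SimpleGraph.reachable_iff_reflTransGen] at huv
  induction huv with
  | refl => exact hu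
  | tail _ hxy ih => exact hP _ _ hxy ih

namespace bipartiteGraph

variable {S D : Type*} {E : Set (D × S)}

@[simp]
theorem adj_inl_inr {i : S} {j : D} : (bipartiteGraph E).Adj (.inl i) (.inr j) ↔ (j, i) ∈ E := by
  simp [bipartiteGraph]

@[simp]
theorem adj_inr_inl {i : S} {j : D} : (bipartiteGraph E).Adj (.inr j) (.inl i) ↔ (j, i) ∈ E := by
  simp [bipartiteGraph]

@[simp]
theorem not_adj_inl_inl {i i' : S} : ¬(bipartiteGraph E).Adj (.inl i) (.inl i') := by
  simp [bipartiteGraph]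

@[simp]
theorem not_adj_inr_inr {j j' : D} : ¬(bipartiteGraph E).Adj (.inr j) (.inr j') := by
  simp [bipartiteGraph]

theorem exists_path_to_nonneighbor (hconn : (bipartiteGraph E).Connected) {i₀ j₀ : S} {d : D}
    (hd : (d, i₀) ∈ E) (hdisj : Disjoint {j : D | (j, i₀) ∈ E} {j : D | (j, j₀) ∈ E}) :
    ∃ d₁ s d₂, (d₁, i₀) ∈ E ∧ (d₁, s) ∈ E ∧ (d₂, s) ∈ E ∧ (d₂, i₀) ∉ E := by
  by_contra! hclosed
  let P : S ⊕ D → Prop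
    | .inl s => ∃ d', (d', i₀) ∈ E ∧ (d', s) ∈ E
    | .inr d' => (d', i₀) ∈ E
  have hj₀ : P (.inl j₀) :=
    (hconn.preconnected (.inl i₀) (.inl j₀)).of_adj_closed ⟨d, hd, hd⟩ <| by
      rintro (s | d₁) (s' | d₂) hadj hx <;> simp only [adj_inl_inr, adj_inr_inl,
        not_adj_inl_inl, not_adj_inr_inr] at hadj
      · obtain ⟨d', hd'i₀, hd's⟩ := hx
        exact hclosed d' s d₂ hd'i₀ hd's hadj
      · exact ⟨d₁, hx, hadj⟩
  obtain ⟨d', hd'i₀, hd'j₀⟩ := hj₀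
  exact Set.disjoint_left.mp hdisj hd'i₀ hd'j₀

end bipartiteGraph

theorem stmt4_general {S D : Type*} (E : Set (D × S))
    (hconn : (bipartiteGraph E).Connected)
    (i₀ j₀ : S)
    (hdi : 1 < srcDeg E i₀)
    (hdisj : Disjoint {j : D | (j, i₀) ∈ E} {j : D | (j, j₀) ∈ E}) :
    patternSigma E ∨ patternRevSigma E := by
  obtain ⟨d, hd⟩ := Set.nonempty_of_ncard_ne_zero (zero_lt_one.trans hdi).ne'
  obtain ⟨d₁, s, d₂, hd₁i₀, hd₁s, hd₂s, hd₂i₀⟩ :=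
    bipartiteGraph.exists_path_to_nonneighbor hconn hd hdisj
  obtain ⟨j, hji₀, hjd₁⟩ := Set.exists_ne_of_one_lt_ncard hdi d₁
  have hi₀s : i₀ ≠ s := by rintro rfl; exact hd₂i₀ hd₂s
  have hjd₂ : j ≠ d₂ := by rintro rfl; exact hd₂i₀ hji₀
  have hd₁d₂ : d₁ ≠ d₂ := by rintro rfl; exact hd₂i₀ hd₁i₀
  exact .inl ⟨i₀, s, j, d₁, d₂, hi₀s, hjd₁, hjd₂, hd₁d₂, hji₀, hd₁i₀, hd₁s, hd₂s⟩

/-- In a connected bipartite network, if two distinct sources, each of degree greater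
than 1, have disjoint neighborhoods, then `E` contains a Σ pattern or a reversed-Σ
pattern. -/
theorem stmt4 {S D : Type*} [Fintype S] [Fintype D] (E : Set (D × S))
    (hconn : (bipartiteGraph E).Connected)
    (i₀ j₀ : S) (hij : i₀ ≠ j₀)
    (hdi : 1 < srcDeg E i₀) (hdj : 1 < srcDeg E j₀)
    (hdisj : Disjoint {j : D | (j, i₀) ∈ E} {j : D | (j, j₀) ∈ E}) :
    patternSigma E ∨ patternRevSigma E :=
  stmt4_general E hconn i₀ j₀ hdi hdisj
end

section
/- Let E ⊆ D × S be the edge set of a connected bipartite graph between a finite set S of sources and a finite set D of destinations. If there exist two distinct destinations each of degree greater than 1, then E contains an X pattern, a Σ pattern, or a reversed-Σ pattern. -/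
lemma adj_inr {S D : Type*} {E : Set (D × S)} {j : D} {v : S ⊕ D}
    (h : (bipartiteGraph E).Adj (Sum.inr j) v) : ∃ s : S, v = Sum.inl s ∧ (j, s) ∈ E := by
  rw [bipartiteGraph, SimpleGraph.fromRel_adj] at h
  obtain ⟨-, h | h⟩ := h
  · obtain ⟨p, _, h, _⟩ := h; simp at h
  · obtain ⟨p, hp, h1, h2⟩ := h
    injection h2 with h2
    exact ⟨p.2, h1, by rw [h2]; exact hp⟩

lemma adj_inl {S D : Type*} {E : Set (D × S)} {s : S} {v : S ⊕ D}
    (h : (bipartiteGraph E).Adj (Sum.inl s) v) : ∃ d : D, v = Sum.inr d ∧ (d, s) ∈ E := by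
  rw [bipartiteGraph, SimpleGraph.fromRel_adj] at h
  obtain ⟨-, h | h⟩ := h
  · obtain ⟨p, hp, h1, h2⟩ := h
    injection h1 with h1
    exact ⟨p.1, h2, by rw [h1]; exact hp⟩
  · obtain ⟨p, _, _, h⟩ := h; simp at h

/-- If a connected bipartite network has two distinct destinations of degree greater
than 1, then its edge set contains an X pattern, a Σ pattern, or a reversed-Σ pattern. -/
theorem stmt5 {S D : Type*} [Fintype S] [Fintype D] (E : Set (D × S))
    (hconn : (bipartiteGraph E).Connected)
    (hdeg : ∃ j₁ j₂ : D, j₁ ≠ j₂ ∧ 1 < dstDeg E j₁ ∧ 1 < dstDeg E j₂) :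
    patternX E ∨ patternSigma E ∨ patternRevSigma E := by
  obtain ⟨j₁, j₂, hne, hd1, hd2⟩ := hdeg
  classical
  obtain ⟨w⟩ := hconn.preconnected (Sum.inr j₁) (Sum.inr j₂)
  obtain ⟨p, hp⟩ : ∃ p : (bipartiteGraph E).Walk (Sum.inr j₁) (Sum.inr j₂), p.IsPath :=
    ⟨w.toPath.1, w.toPath.2⟩
  obtain ⟨v, he1, q, rfl⟩ := p.exists_eq_cons_of_ne (by simpa using hne)
  obtain ⟨s, rfl, hjs⟩ := adj_inr he1
  obtain ⟨v2, he2, q2, rfl⟩ := q.exists_eq_cons_of_ne (by simp)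
  obtain ⟨d, rfl, hds⟩ := adj_inl he2
  rw [SimpleGraph.Walk.cons_isPath_iff, SimpleGraph.Walk.cons_isPath_iff] at hp
  obtain ⟨⟨hq2, hs_not⟩, hj1_not⟩ := hp
  have hj1d : j₁ ≠ d := by
    rintro rfl
    exact hj1_not (by simp [SimpleGraph.Walk.support_cons, q2.start_mem_support])
  by_cases hd : d = j₂
  · subst hd
    obtain ⟨a, ha, has⟩ := Set.exists_ne_of_one_lt_ncard hd1 s
    obtain ⟨b, hb, hbs⟩ := Set.exists_ne_of_one_lt_ncard hd2 s
    by_cases hab : a = b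
    · subst hab
      exact Or.inl ⟨s, a, j₁, d, Ne.symm has, hj1d, hjs, ha, hds, hb⟩
    · exact Or.inr (Or.inr ⟨a, s, b, j₁, d, has, hab, fun h => hbs h.symm, hj1d, ha, hjs, hds, hb⟩)
  · obtain ⟨v3, he3, q3, rfl⟩ := q2.exists_eq_cons_of_ne (by simpa using hd)
    obtain ⟨s', rfl, hds'⟩ := adj_inr he3
    obtain ⟨v4, he4, q4, rfl⟩ := q3.exists_eq_cons_of_ne (by simp)
    obtain ⟨d', rfl, hd's'⟩ := adj_inl he4
    rw [SimpleGraph.Walk.cons_isPath_iff, SimpleGraph.Walk.cons_isPath_iff] at hq2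
    obtain ⟨⟨hq4, hs'_not⟩, hd_not⟩ := hq2
    have hss' : s ≠ s' := by
      rintro rfl
      exact hs_not (by simp [SimpleGraph.Walk.support_cons, q4.start_mem_support])
    have hdd' : d ≠ d' := by
      rintro rfl
      exact hd_not (by simp [q4.start_mem_support])
    have hj1d' : j₁ ≠ d' := by
      rintro rfl
      exact hj1_not (by simp [SimpleGraph.Walk.support_cons, q4.start_mem_support])
    exact Or.inr (Or.inl ⟨s, s', j₁, d, d', hss', hj1d, hj1d', hdd', hjs, hds, hds', hd's'⟩)
end

section
/- Let E ⊆ D × S be the edge set of a connected bipartite graph between a finite set S of sources and a finite set D of destinations with |S| + |D| ≥ 3. If at most one source has degree greater than 1 and at most one destination has degree greater than 1, then there exist i* ∈ S and j* ∈ D such that every edge (j,i) ∈ E satisfies i = i* or j = j* (i.e., the network is a MAC component at j* and a BC component at i* linked by the Z edge (j*,i*)). -/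
lemma bg_step {S D : Type*} [Fintype S] [Fintype D] (E : Set (D × S)) {i : S} {j : D}
    (hi : srcDeg E i ≤ 1) (hj : dstDeg E j ≤ 1)
    (hiE : (j, i) ∈ E)
    {u x : S ⊕ D} (hadj : (bipartiteGraph E).Adj u x)
    (hu : u = Sum.inl i ∨ u = Sum.inr j) : x = Sum.inl i ∨ x = Sum.inr j := by
  rw [bipartiteGraph, SimpleGraph.fromRel_adj] at hadj
  obtain ⟨hne, h | h⟩ := hadj <;>
    obtain ⟨⟨j', i'⟩, hpE, ha, hb⟩ := h
  · -- u = inl i', x = inr j'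
    rcases hu with hu | hu
    · subst ha hb
      have : i' = i := by injection hu
      subst this
      right
      have : j' = j := (Set.ncard_le_one_iff (Set.toFinite _)).mp hi hpE hiE
      rw [this]
    · rw [hu] at ha; exact absurd ha (by simp)
  · -- x = inl i', u = inr j'
    rcases hu with hu | hu
    · rw [hu] at hb; exact absurd hb (by simp)
    · subst ha hb
      have : j' = j := by injection hu
      subst this
      left
      have : i' = i := (Set.ncard_le_one_iff (Set.toFinite _)).mp hj hpE hiE
      rw [this]

lemma bg_closed {S D : Type*} [Fintype S] [Fintype D] (E : Set (D × S)) {i : S} {j : D}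
    (hi : srcDeg E i ≤ 1) (hj : dstDeg E j ≤ 1) (hiE : (j, i) ∈ E)
    {u v : S ⊕ D} (w : (bipartiteGraph E).Walk u v)
    (hu : u = Sum.inl i ∨ u = Sum.inr j) : v = Sum.inl i ∨ v = Sum.inr j := by
  induction w with
  | nil => exact hu
  | cons h p ih => exact ih (bg_step E hi hj hiE h hu)

/-- In a connected bipartite network with at least 3 nodes, if at most one source has
degree greater than 1 and at most one destination has degree greater than 1, then there
are `i⋆ ∈ S` and `j⋆ ∈ D` such that every edge `(j,i) ∈ E` satisfies `i = i⋆` or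
`j = j⋆`: the network is a MAC component at `j⋆` and a BC component at `i⋆` linked by
the Z edge `(j⋆, i⋆)`. -/
theorem stmt7 {S D : Type*} [Fintype S] [Fintype D] (E : Set (D × S))
    (hconn : (bipartiteGraph E).Connected)
    (hcard : 3 ≤ Fintype.card S + Fintype.card D)
    (hsrc : ∀ i₁ i₂ : S, 1 < srcDeg E i₁ → 1 < srcDeg E i₂ → i₁ = i₂)
    (hdst : ∀ j₁ j₂ : D, 1 < dstDeg E j₁ → 1 < dstDeg E j₂ → j₁ = j₂) :
    ∃ iStar : S, ∃ jStar : D, ∀ p ∈ E, p.2 = iStar ∨ p.1 = jStar := by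
  have hcardSum : 3 ≤ Fintype.card (S ⊕ D) := by
    rw [Fintype.card_sum]; exact hcard
  -- every edge touches a high-degree endpoint
  have key : ∀ p ∈ E, 1 < srcDeg E p.2 ∨ 1 < dstDeg E p.1 := by
    rintro ⟨j, i⟩ hp
    classical
    by_contra hc
    push_neg at hc
    obtain ⟨hi, hj⟩ := hc
    have hall : ∀ v : S ⊕ D, v = Sum.inl i ∨ v = Sum.inr j := by
      intro v
      obtain ⟨w⟩ := hconn (Sum.inl i) v
      exact bg_closed E hi hj hp w (Or.inl rfl)
    have hsub : (Finset.univ : Finset (S ⊕ D)) ⊆ {Sum.inl i, Sum.inr j} := by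
      intro v _
      rcases hall v with h | h <;> simp [h]
    have := Finset.card_le_card hsub
    have h2 : ({Sum.inl i, Sum.inr j} : Finset (S ⊕ D)).card ≤ 2 :=
      (Finset.card_insert_le _ _).trans (by simp)
    rw [Finset.card_univ] at this
    omega
  -- E is nonempty
  have hEne : E.Nonempty := by
    have : Nontrivial (S ⊕ D) := Fintype.one_lt_card_iff_nontrivial.mp (by omega)
    obtain ⟨a, b, hab⟩ := this
    obtain ⟨w⟩ := hconn a b
    cases w with
    | nil => exact absurd rfl hab
    | cons h p =>
      rw [bipartiteGraph, SimpleGraph.fromRel_adj] at h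
      obtain ⟨_, h | h⟩ := h <;> obtain ⟨q, hq, _⟩ := h <;> exact ⟨q, hq⟩
  by_cases hexi : ∃ i0, 1 < srcDeg E i0
  · obtain ⟨i0, hi0⟩ := hexi
    by_cases hexj : ∃ j0, 1 < dstDeg E j0
    · obtain ⟨j0, hj0⟩ := hexj
      exact ⟨i0, j0, fun p hp =>
        (key p hp).imp (fun h => hsrc _ _ h hi0) (fun h => hdst _ _ h hj0)⟩
    · push_neg at hexj
      have : {j : D | (j, i0) ∈ E}.Nonempty := by
        rw [Set.nonempty_iff_ne_empty]
        intro h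
        simp [srcDeg, h] at hi0
      obtain ⟨j0, _⟩ := this
      refine ⟨i0, j0, fun p hp => Or.inl ?_⟩
      have := (key p hp).resolve_right (not_lt.mpr (hexj p.1)).elim
      · exact hsrc _ _ this hi0
  · push_neg at hexi
    by_cases hexj : ∃ j0, 1 < dstDeg E j0
    · obtain ⟨j0, hj0⟩ := hexj
      have : {i : S | (j0, i) ∈ E}.Nonempty := by
        rw [Set.nonempty_iff_ne_empty]
        intro h
        simp [dstDeg, h] at hj0
      obtain ⟨i0, _⟩ := this
      refine ⟨i0, j0, fun p hp => Or.inr ?_⟩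
      have := (key p hp).resolve_left (not_lt.mpr (hexi p.2)).elim
      exact hdst _ _ this hj0
    · push_neg at hexj
      obtain ⟨p, hp⟩ := hEne
      rcases key p hp with h | h
      · exact absurd h (not_lt.mpr (hexi p.2))
      · exact absurd h (not_lt.mpr (hexj p.1))
end

section
/- Let E ⊆ D × S be the edge set of a connected bipartite graph between a finite set S of sources and a finite set D of destinations. Then E contains an X pattern, a Σ pattern, or a reversed-Σ pattern if and only if there exist two distinct sources each of degree greater than 1 or two distinct destinations each of degree greater than 1 (i.e., if and only if the network fails the MAC-Z-BC degree condition). -/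
section Aux

open SimpleGraph

variable {S D : Type*}

lemma aux_step_inl {E : Set (D × S)} {a : S} {v : S ⊕ D}
    (h : (bipartiteGraph E).Adj (Sum.inl a) v) : ∃ j : D, v = Sum.inr j ∧ (j, a) ∈ E := by
  rw [bipartiteGraph, SimpleGraph.fromRel_adj] at h
  obtain ⟨-, ⟨⟨j, i⟩, hp, h1, h2⟩ | ⟨⟨j, i⟩, hp, h1, h2⟩⟩ := h
  · injection h1 with h1; subst h1; exact ⟨j, h2, hp⟩
  · exact absurd h2 (by simp)

lemma aux_step_inr {E : Set (D × S)} {j : D} {v : S ⊕ D}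
    (h : (bipartiteGraph E).Adj (Sum.inr j) v) : ∃ s : S, v = Sum.inl s ∧ (j, s) ∈ E := by
  rw [bipartiteGraph, SimpleGraph.fromRel_adj] at h
  obtain ⟨-, ⟨⟨j', i⟩, hp, h1, h2⟩ | ⟨⟨j', i⟩, hp, h1, h2⟩⟩ := h
  · exact absurd h1 (by simp)
  · injection h2 with h2; subst h2; exact ⟨i, h1, hp⟩

lemma aux_src_two {E : Set (D × S)} [Finite D] {i : S} {j j' : D} (h : j ≠ j')
    (h1 : (j, i) ∈ E) (h2 : (j', i) ∈ E) : 1 < srcDeg E i :=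
  (Set.one_lt_ncard (Set.toFinite _)).2 ⟨j, h1, j', h2, h⟩

lemma aux_common {E : Set (D × S)} {a b : S} {c : D} (hab : a ≠ b)
    (ha : 1 < srcDeg E a) (hb : 1 < srcDeg E b) (hca : (c, a) ∈ E) (hcb : (c, b) ∈ E) :
    patternX E ∨ patternSigma E := by
  obtain ⟨j₁, hj₁, hj₁c⟩ := Set.exists_ne_of_one_lt_ncard ha c
  obtain ⟨j₃, hj₃, hj₃c⟩ := Set.exists_ne_of_one_lt_ncard hb c
  by_cases h : j₁ = j₃
  · exact Or.inl ⟨a, b, j₁, c, hab, hj₁c, hj₁, h ▸ hj₃, hca, hcb⟩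
  · exact Or.inr ⟨a, b, j₁, c, j₃, hab, hj₁c, h, Ne.symm hj₃c, hj₁, hca, hcb, hj₃⟩

lemma aux_key {E : Set (D × S)} [Finite D] : ∀ n : ℕ, ∀ a b : S, a ≠ b →
    1 < srcDeg E a → 1 < srcDeg E b →
    ∀ w : (bipartiteGraph E).Walk (Sum.inl a) (Sum.inl b), w.length ≤ n →
    patternX E ∨ patternSigma E := by
  intro n
  induction n using Nat.strong_induction_on with
  | _ n IH =>
    intro a b hab ha hb w hw
    classical
    obtain ⟨p, hpath, hlen⟩ : ∃ p : (bipartiteGraph E).Walk (Sum.inl a) (Sum.inl b),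
        p.IsPath ∧ p.length ≤ n := ⟨w.bypass, w.bypass_isPath, le_trans w.length_bypass_le hw⟩
    obtain ⟨v, hadj, q, rfl⟩ := Walk.exists_eq_cons_of_ne (by simp [hab]) p
    obtain ⟨j, rfl, hja⟩ := aux_step_inl hadj
    obtain ⟨v', hadj', q', rfl⟩ := Walk.exists_eq_cons_of_ne (by simp) q
    obtain ⟨s, rfl, hjs⟩ := aux_step_inr hadj'
    by_cases hsb : s = b
    · subst hsb
      exact aux_common hab ha hb hja hjs
    · obtain ⟨v'', hadj'', q'', rfl⟩ := Walk.exists_eq_cons_of_ne (by simp [hsb]) q'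
      obtain ⟨j', rfl, hj's⟩ := aux_step_inl hadj''
      have hjj' : j ≠ j' := by
        have hnd := hpath.support_nodup
        simp only [Walk.support_cons, List.nodup_cons, List.mem_cons, not_or] at hnd
        intro h; subst h
        obtain ⟨-, ⟨-, hmem⟩, -, -⟩ := hnd
        exact hmem q''.start_mem_support
      have hs : 1 < srcDeg E s := aux_src_two hjj' hjs hj's
      have hlen' : (Walk.cons hadj'' q'').length < n := by
        simp only [Walk.length_cons] at hlen ⊢
        omega
      exact IH _ hlen' s b hsb hs hb (Walk.cons hadj'' q'') le_rfl

lemma aux_sources {E : Set (D × S)} [Finite D] (hconn : (bipartiteGraph E).Connected)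
    {a b : S} (hab : a ≠ b) (ha : 1 < srcDeg E a) (hb : 1 < srcDeg E b) :
    patternX E ∨ patternSigma E := by
  obtain ⟨w⟩ := hconn.preconnected (Sum.inl a) (Sum.inl b)
  exact aux_key w.length a b hab ha hb w le_rfl

/-- The swapped edge set. -/
def auxSwap (E : Set (D × S)) : Set (S × D) := {p | (p.2, p.1) ∈ E}

def aux_swap_iso (E : Set (D × S)) :
    bipartiteGraph E ≃g bipartiteGraph (auxSwap E) where
  toEquiv := Equiv.sumComm S D
  map_rel_iff' := by
    rintro (s | j) (s' | j') <;>
      simp [bipartiteGraph, SimpleGraph.fromRel_adj, auxSwap, Prod.exists] <;> aesop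

end Aux

/-- In a connected bipartite network, the edge set contains an X pattern, a Σ pattern,
or a reversed-Σ pattern if and only if there exist two distinct sources each of degree
greater than 1 or two distinct destinations each of degree greater than 1, i.e. if and
only if the network fails the MAC-Z-BC degree condition. -/
theorem stmt8 {S D : Type*} [Fintype S] [Fintype D] (E : Set (D × S))
    (hconn : (bipartiteGraph E).Connected) :
    (patternX E ∨ patternSigma E ∨ patternRevSigma E) ↔
      ((∃ i₁ i₂ : S, i₁ ≠ i₂ ∧ 1 < srcDeg E i₁ ∧ 1 < srcDeg E i₂) ∨
       (∃ j₁ j₂ : D, j₁ ≠ j₂ ∧ 1 < dstDeg E j₁ ∧ 1 < dstDeg E j₂)) := by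
  have dst_two : ∀ {i i' : S} {j : D}, i ≠ i' → (j, i) ∈ E → (j, i') ∈ E → 1 < dstDeg E j :=
    fun h h1 h2 => (Set.one_lt_ncard (Set.toFinite _)).2 ⟨_, h1, _, h2, h⟩
  constructor
  · rintro (⟨i₁, i₂, j₁, j₂, hi, hj, e1, e2, e3, e4⟩ |
      ⟨i₁, i₂, j₁, j₂, j₃, hi, h12, h13, h23, e1, e2, e3, e4⟩ |
      ⟨i₁, i₂, i₃, j₁, j₂, h12, h13, h23, hj, e1, e2, e3, e4⟩)
    · exact Or.inl ⟨i₁, i₂, hi, aux_src_two hj e1 e3, aux_src_two hj e2 e4⟩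
    · exact Or.inl ⟨i₁, i₂, hi, aux_src_two h12 e1 e2, aux_src_two h23 e3 e4⟩
    · exact Or.inr ⟨j₁, j₂, hj, dst_two h12 e1 e2, dst_two h23 e3 e4⟩
  · rintro (⟨a, b, hab, ha, hb⟩ | ⟨a, b, hab, ha, hb⟩)
    · exact (aux_sources hconn hab ha hb).imp id Or.inl
    · have hconn' : (bipartiteGraph (auxSwap E)).Connected :=
        ((aux_swap_iso E).connected_iff).1 hconn
      have ha' : 1 < srcDeg (auxSwap E) a := ha
      have hb' : 1 < srcDeg (auxSwap E) b := hb
      rcases aux_sources hconn' hab ha' hb' with h | h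
      · obtain ⟨i₁, i₂, j₁, j₂, hi, hj, e1, e2, e3, e4⟩ := h
        exact Or.inl ⟨j₁, j₂, i₁, i₂, hj, hi, e1, e3, e2, e4⟩
      · obtain ⟨i₁, i₂, j₁, j₂, j₃, hi, h12, h13, h23, e1, e2, e3, e4⟩ := h
        exact Or.inr (Or.inr ⟨j₁, j₂, j₃, i₁, i₂, h12, h13, h23, hi, e1, e2, e3, e4⟩)
end

section
/- Let H₁₁ = diag(1,1,1), H₁₂ = diag(0,1,1), H₂₁ = diag(1,0,1), and H₂₂ = diag(1,1,1) be diagonal 3×3 complex matrices, and let V₁₁ = V₁₂ = (1,0,1)ᵀ and V₂₁ = V₂₂ = (0,1,1)ᵀ in ℂ³. Then at Receiver 1 the three vectors H₁₁·V₁₁, H₁₂·V₁₂, and H₁₁·V₂₁ are linearly independent in ℂ³, and at Receiver 2 the three vectors H₂₁·V₂₁, H₂₂·V₂₂, and H₂₁·V₁₁ are linearly independent in ℂ³; i.e., at each receiver the two desired signal vectors are linearly independent of the aligned interference, so each receiver can recover one interference-free dimension per desired message by zero-forcing. -/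
open Matrix

/-- Zero-forcing feasibility in the 3-carrier 2-user X channel: with channel matrices
`H₁₁ = diag(1,1,1)`, `H₁₂ = diag(0,1,1)`, `H₂₁ = diag(1,0,1)`, `H₂₂ = diag(1,1,1)` and
beamforming vectors `V₁₁ = V₁₂ = (1,0,1)ᵀ`, `V₂₁ = V₂₂ = (0,1,1)ᵀ`, at Receiver 1 the
vectors `H₁₁·V₁₁, H₁₂·V₁₂, H₁₁·V₂₁` are linearly independent in `ℂ³`, and at Receiver 2
the vectors `H₂₁·V₂₁, H₂₂·V₂₂, H₂₁·V₁₁` are linearly independent in `ℂ³`. -/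
theorem stmt10 :
    let H11 : Matrix (Fin 3) (Fin 3) ℂ := Matrix.diagonal ![1, 1, 1]
    let H12 : Matrix (Fin 3) (Fin 3) ℂ := Matrix.diagonal ![0, 1, 1]
    let H21 : Matrix (Fin 3) (Fin 3) ℂ := Matrix.diagonal ![1, 0, 1]
    let H22 : Matrix (Fin 3) (Fin 3) ℂ := Matrix.diagonal ![1, 1, 1]
    let V11 : Fin 3 → ℂ := ![1, 0, 1]
    let V12 : Fin 3 → ℂ := ![1, 0, 1]
    let V21 : Fin 3 → ℂ := ![0, 1, 1]
    let V22 : Fin 3 → ℂ := ![0, 1, 1]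
    LinearIndependent ℂ ![H11.mulVec V11, H12.mulVec V12, H11.mulVec V21] ∧
    LinearIndependent ℂ ![H21.mulVec V21, H22.mulVec V22, H21.mulVec V11] := by
  intro H11 H12 H21 H22 V11 V12 V21 V22
  -- At each receiver the three received vectors are the rows of a 0-1 matrix of determinant -1.
  constructor <;>
  · refine linearIndependent_rows_of_det_ne_zero (A := of ![_, _, _]) ?_
    simp [det_fin_three, mulVec_diagonal, H11, H12, H21, H22, V11, V12, V21, V22]
end
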